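/- arXiv:1812.11195 — 11 statements merged into one kernel-verified Lean document; each statement's English description precedes it below -/
import Mathlib

section
/- Let R be a Bezout domain and let a be a nonzero nonunit element of R. Then a is pseudo-irreducible if and only if the quotient ring R/aR is connected, i.e. its only idempotents are 0 and 1. -/
/-- A nonzero nonunit `c` of an integral domain is pseudo-irreducible if whenever
`c = a * b` with `aR + bR = R`, then `a` or `b` is a unit. -/
def PseudoIrreducible {R : Type*} [CommRing R] (c : R) : Prop :=
  c ≠ 0 ∧ ¬IsUnit c ∧ ∀ a b : R, c = a * b →
    Ideal.span {a} + Ideal.span {b} = ⊤ → IsUnit a ∨ IsUnit b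

theorem pseudoIrreducible_iff_quotient_connected {R : Type*} [CommRing R] [IsDomain R]
    [IsBezout R] (a : R) (ha : a ≠ 0) (hu : ¬IsUnit a) :
    PseudoIrreducible a ↔
      ∀ e : R ⧸ Ideal.span {a}, IsIdempotentElem e → e = 0 ∨ e = 1 := by
  constructor
  · intro hp e he
    obtain ⟨x, rfl⟩ := Ideal.Quotient.mk_surjective e
    have hdvd : a ∣ x * x - x := by
      rw [← Ideal.mem_span_singleton]
      exact Ideal.Quotient.eq.mp (by simpa [map_mul] using he.eq)
    obtain ⟨g, hg⟩ := IsBezout.iff_span_pair_isPrincipal.mp ‹IsBezout R› a x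
    have hg' : Ideal.span {a, x} = Ideal.span {g} := hg
    have hga : g ∣ a := by
      rw [← Ideal.mem_span_singleton, ← hg']
      exact Ideal.subset_span (by simp)
    have hgx : g ∣ x := by
      rw [← Ideal.mem_span_singleton, ← hg']
      exact Ideal.subset_span (by simp)
    obtain ⟨r, s, hrs⟩ := Ideal.mem_span_pair.mp (hg' ▸ Ideal.mem_span_singleton_self g)
    obtain ⟨c, hc⟩ := hga
    obtain ⟨y, hy⟩ := hgx
    have hgx2 : g ∣ x := ⟨y, hy⟩
    have hg0 : g ≠ 0 := fun h => ha (by simp [hc, h])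
    have h1 : r * c + s * y = 1 := by
      refine mul_left_cancel₀ hg0 ?_
      rw [mul_one]
      linear_combination hrs - r * hc - s * hy
    have hco : IsCoprime c y := ⟨r, s, h1⟩
    have hcx : c ∣ x - 1 := by
      have hcy : c ∣ y * (x - 1) := by
        have hd : a ∣ g * (y * (x - 1)) := by
          rw [show g * (y * (x - 1)) = x * x - x by rw [hy]; ring]
          exact hdvd
        rw [hc] at hd
        exact (mul_dvd_mul_iff_left hg0).mp hd
      exact hco.dvd_of_dvd_mul_left hcy
    have htop : Ideal.span {g} + Ideal.span {c} = ⊤ := by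
      rw [Ideal.eq_top_iff_one, Ideal.add_eq_sup]
      have hx : x ∈ Ideal.span {g} := Ideal.mem_span_singleton.mpr hgx2
      have hx1 : x - 1 ∈ Ideal.span {c} := Ideal.mem_span_singleton.mpr hcx
      have := sub_mem (Ideal.mem_sup_left hx) (Ideal.mem_sup_right hx1)
      simpa using this
    rcases hp.2.2 g c hc htop with hgu | hcu
    · right
      have hax1 : a ∣ x - 1 := by
        obtain ⟨t, ht⟩ := hcx
        exact ⟨↑hgu.unit⁻¹ * t, by rw [hc, ht]; rw [show g * c * (↑hgu.unit⁻¹ * t) = (g * ↑hgu.unit⁻¹) * c * t by ring, hgu.mul_val_inv]; ring⟩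
      exact Ideal.Quotient.eq.mpr (Ideal.mem_span_singleton.mpr hax1)
    · left
      have hax : a ∣ x := by
        exact ⟨↑hcu.unit⁻¹ * y, by rw [hc, hy]; rw [show g * c * (↑hcu.unit⁻¹ * y) = g * (c * ↑hcu.unit⁻¹) * y by ring, hcu.mul_val_inv]; ring⟩
      exact Ideal.Quotient.eq_zero_iff_mem.mpr (Ideal.mem_span_singleton.mpr hax)
  · intro h
    refine ⟨ha, hu, fun b c hbc htop => ?_⟩
    have h1 : (1 : R) ∈ Ideal.span {b} + Ideal.span {c} := htop ▸ Submodule.mem_top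
    rw [Ideal.add_eq_sup, Submodule.mem_sup] at h1
    obtain ⟨p, hp, q, hq, hpq⟩ := h1
    obtain ⟨u, hu'⟩ := Ideal.mem_span_singleton.mp hp
    obtain ⟨v, hv⟩ := Ideal.mem_span_singleton.mp hq
    rw [hu', hv] at hpq
    have hb0 : b ≠ 0 := fun h0 => ha (by simp [hbc, h0])
    have hc0 : c ≠ 0 := fun h0 => ha (by simp [hbc, h0])
    have hidem : IsIdempotentElem (Ideal.Quotient.mk (Ideal.span {a}) (b * u)) := by
      show _ * _ = _
      rw [← map_mul]
      refine Ideal.Quotient.eq.mpr (Ideal.mem_span_singleton.mpr ⟨-(u * v), ?_⟩)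
      linear_combination (b * u) * hpq + u * v * hbc
    rcases h _ hidem with h0 | h1
    · right
      have hd : a ∣ b * u := Ideal.mem_span_singleton.mp (Ideal.Quotient.eq_zero_iff_mem.mp h0)
      rw [hbc] at hd
      have hcu : c ∣ u := (mul_dvd_mul_iff_left hb0).mp hd
      exact isUnit_of_dvd_one (hpq ▸ dvd_add (hcu.mul_left b) (Dvd.intro v rfl))
    · left
      have hd : a ∣ b * u - 1 := Ideal.mem_span_singleton.mp (Ideal.Quotient.eq.mp h1)
      have hacv : a ∣ c * v := by
        rw [show c * v = -(b * u - 1) by linear_combination hpq]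
        exact hd.neg_right
      rw [hbc, mul_comm b c] at hacv
      have hbv : b ∣ v := (mul_dvd_mul_iff_left hc0).mp hacv
      exact isUnit_of_dvd_one (hpq ▸ dvd_add (Dvd.intro u rfl) (hbv.mul_left c))
end

section
/- Let R be a commutative Bezout domain, let a be a neat element of R, and suppose a = xy for some x, y ∈ R. Then x is a neat element of R. -/
/-!
A divisor `x` of `a = r * s` factors as `x = r' * s'` with `r' ∣ r` and `s' ∣ s`, since a Bezout
domain is a decomposition monoid; coprimality with `b`, with `c` and between the two factors
passes from `r, s` to their divisors `r', s'`.
-/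

/-- An element `a` of a commutative Bezout domain is neat if for all `b, c` with
`bR + cR = R` there exist `r, s` with `a = r * s`, `rR + bR = R`, `sR + cR = R` and
`rR + sR = R`. -/
def IsNeatElement {R : Type*} [CommRing R] (a : R) : Prop :=
  ∀ b c : R, Ideal.span {b} + Ideal.span {c} = ⊤ →
    ∃ r s : R, a = r * s ∧
      Ideal.span {r} + Ideal.span {b} = ⊤ ∧
      Ideal.span {s} + Ideal.span {c} = ⊤ ∧
      Ideal.span {r} + Ideal.span {s} = ⊤

theorem Ideal.span_singleton_add_span_singleton_eq_top_iff {R : Type*} [CommSemiring R]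
    (x y : R) : Ideal.span {x} + Ideal.span {y} = ⊤ ↔ IsCoprime x y := by
  rw [← Ideal.one_eq_top, ← Ideal.isCoprime_iff_add, Ideal.isCoprime_span_singleton_iff]

theorem isNeatElement_iff {R : Type*} [CommRing R] (a : R) :
    IsNeatElement a ↔ ∀ b c : R, IsCoprime b c →
      ∃ r s : R, a = r * s ∧ IsCoprime r b ∧ IsCoprime s c ∧ IsCoprime r s := by
  simp only [IsNeatElement, Ideal.span_singleton_add_span_singleton_eq_top_iff]

theorem IsNeatElement.of_dvd {R : Type*} [CommRing R] [DecompositionMonoid R] {a x : R}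
    (ha : IsNeatElement a) (hx : x ∣ a) : IsNeatElement x := by
  rw [isNeatElement_iff] at ha ⊢
  intro b c hbc
  obtain ⟨r, s, rfl, hrb, hsc, hrs⟩ := ha b c hbc
  obtain ⟨r', s', hr', hs', rfl⟩ := exists_dvd_and_dvd_of_dvd_mul hx
  exact ⟨r', s', rfl, hrb.of_isCoprime_of_dvd_left hr', hsc.of_isCoprime_of_dvd_left hs',
    (hrs.of_isCoprime_of_dvd_left hr').of_isCoprime_of_dvd_right hs'⟩

theorem divisor_of_neat_is_neat {R : Type*} [CommRing R] [IsDomain R] [IsBezout R]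
    (a x y : R) (hneat : IsNeatElement a) (hxy : a = x * y) :
    IsNeatElement x :=
  hneat.of_dvd (Dvd.intro y hxy.symm)
end

section
/- Let R be a J-Noetherian Bezout domain which does not have stable range 1. Then there exists a nonzero nonunit element a ∈ R such that the quotient ring R/aR is a local ring. -/
/-!
If `R` does not have stable range 1 it has a nonzero nonunit, so among the `J`-radicals of
principal ideals `cR` with `c` a nonzero nonunit there is, by the ascending chain condition, a
maximal one. Such a `c` lies in a single maximal ideal: if `c` lay in maximal ideals `M ≠ N` and
`t ∈ M \ N`, the generator `e` of the Bezout ideal `cR + tR` would be a nonunit divisor of `c`,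
so by maximality `J(eR) = J(cR) ⊆ N`, contradicting `t ∈ eR` and `t ∉ N`.
Hence `R/cR` is local.
-/

/-- A commutative ring is `J`-Noetherian if it satisfies the ascending chain condition
on `J`-radical ideals, i.e. ideals that equal the intersection of all maximal ideals
containing them (equivalently, ideals fixed by `Ideal.jacobson`). -/
def IsJNoetherian (R : Type*) [CommRing R] : Prop :=
  ∀ f : ℕ →o Ideal R, (∀ n, (f n).jacobson = f n) → ∃ n, ∀ m, n ≤ m → f m = f n

/-- A commutative ring has stable range 1 if whenever `aR + bR = R` there is `t` with
`a + b * t` a unit. -/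
def HasStableRangeOne (R : Type*) [CommRing R] : Prop :=
  ∀ a b : R, Ideal.span {a} + Ideal.span {b} = ⊤ → ∃ t : R, IsUnit (a + b * t)

open Ideal

section

variable {R : Type*} [CommRing R]

theorem exists_ne_zero_not_isUnit_of_not_hasStableRangeOne (h : ¬HasStableRangeOne R) :
    ∃ a : R, a ≠ 0 ∧ ¬IsUnit a := by
  simp only [HasStableRangeOne, not_forall, not_exists] at h
  obtain ⟨a, b, hab, hnot⟩ := h
  refine ⟨a, ?_, by simpa using hnot 0⟩
  rintro rfl
  have hb : IsUnit b := by simpa using hab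
  simpa using hnot ↑hb.unit⁻¹

theorem IsJNoetherian.wellFoundedGT (hJ : IsJNoetherian R) :
    WellFoundedGT {I : Ideal R // I.jacobson = I} := by
  rw [wellFoundedGT_iff_monotone_chain_condition]
  intro f
  obtain ⟨n, hn⟩ := hJ ((OrderHom.Subtype.val _).comp f) fun n => (f n).2
  exact ⟨n, fun m hm => Subtype.ext (hn m hm).symm⟩

theorem IsJNoetherian.exists_jacobson_maximal (hJ : IsJNoetherian R) {ι : Type*} [Nonempty ι]
    (f : ι → Ideal R) :
    ∃ i, ∀ j, (f i).jacobson ≤ (f j).jacobson → (f j).jacobson = (f i).jacobson := by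
  have := hJ.wellFoundedGT
  let g : ι → {I : Ideal R // I.jacobson = I} := fun i => ⟨(f i).jacobson, jacobson_idem⟩
  obtain ⟨-, ⟨i, rfl⟩, hi⟩ := wellFounded_gt.has_min (Set.range g) (Set.range_nonempty g)
  exact ⟨i, fun j hij => congrArg Subtype.val
    ((show g i ≤ g j from hij).eq_of_not_lt (hi (g j) ⟨j, rfl⟩)).symm⟩

theorem IsBezout.exists_dvd_mem_not_mem [IsBezout R] {c : R} {M N : Ideal R} (hcM : c ∈ M)
    (hMN : ¬M ≤ N) : ∃ e, e ∣ c ∧ e ∈ M ∧ e ∉ N := by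
  obtain ⟨t, htM, htN⟩ := SetLike.not_le_iff_exists.mp hMN
  have hspan := IsBezout.span_gcd c t
  refine ⟨IsBezout.gcd c t, IsBezout.gcd_dvd_left c t, ?_, fun heN => htN ?_⟩
  · have hle : span {c, t} ≤ M := span_le.mpr (Set.insert_subset_iff.mpr ⟨hcM, by simpa⟩)
    exact hle (hspan ▸ mem_span_singleton_self _)
  · exact (span_singleton_le_iff_mem N).mpr heN (hspan ▸ subset_span (by simp))

theorem IsBezout.eq_of_isMaximal_of_jacobson_span_maximal [IsBezout R] {c : R}
    (hmax : ∀ e, e ∣ c → ¬IsUnit e → (span {e}).jacobson ≤ (span {c}).jacobson)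
    {M N : Ideal R} (hM : M.IsMaximal) (hN : N.IsMaximal) (hcM : c ∈ M) (hcN : c ∈ N) :
    M = N := by
  by_contra hne
  obtain ⟨e, hec, heM, heN⟩ :=
    IsBezout.exists_dvd_mem_not_mem hcM fun hle => hne (hM.eq_of_le hN.ne_top hle)
  have he : ¬IsUnit e := fun hu => hM.ne_top (M.eq_top_of_isUnit_mem heM hu)
  have hjN : (span {c}).jacobson ≤ N := sInf_le ⟨(span_singleton_le_iff_mem N).mpr hcN, hN⟩
  exact heN (hjN (hmax e hec he (le_jacobson (mem_span_singleton_self e))))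

theorem Ideal.Quotient.isLocalRing_of_isMaximal_unique {I : Ideal R} (hI : I ≠ ⊤)
    (h : ∀ M N : Ideal R, M.IsMaximal → N.IsMaximal → I ≤ M → I ≤ N → M = N) :
    IsLocalRing (R ⧸ I) := by
  have : Nontrivial (R ⧸ I) := Quotient.nontrivial_iff.mpr hI
  obtain ⟨M, hM⟩ := exists_maximal (R ⧸ I)
  have hsurj := Quotient.mk_surjective (I := I)
  have hle (K : Ideal (R ⧸ I)) : I ≤ K.comap (Quotient.mk I) :=
    mk_ker.symm.trans_le (ker_le_comap _)
  refine .of_unique_max_ideal ⟨M, hM, fun N hN => comap_injective_of_surjective _ hsurj ?_⟩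
  exact h _ _ (comap_isMaximal_of_surjective _ hsurj) (comap_isMaximal_of_surjective _ hsurj)
    (hle N) (hle M)

end

theorem exists_local_quotient_of_jNoetherian_not_sr1_general (R : Type*) [CommRing R]
    [IsBezout R] (hJ : IsJNoetherian R) (hsr : ¬HasStableRangeOne R) :
    ∃ a : R, a ≠ 0 ∧ ¬IsUnit a ∧ IsLocalRing (R ⧸ Ideal.span {a}) := by
  obtain ⟨a, ha0, ha⟩ := exists_ne_zero_not_isUnit_of_not_hasStableRangeOne hsr
  have : Nonempty {c : R // c ≠ 0 ∧ ¬IsUnit c} := ⟨⟨a, ha0, ha⟩⟩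
  obtain ⟨⟨c, hc0, hc⟩, hcmax⟩ := hJ.exists_jacobson_maximal
    fun c : {c : R // c ≠ 0 ∧ ¬IsUnit c} => span {c.1}
  have hmax (e : R) (hec : e ∣ c) (he : ¬IsUnit e) :
      (span {e}).jacobson ≤ (span {c}).jacobson :=
    (hcmax ⟨e, ne_zero_of_dvd_ne_zero hc0 hec, he⟩
      (jacobson_mono (span_singleton_le_span_singleton.mpr hec))).le
  refine ⟨c, hc0, hc, Quotient.isLocalRing_of_isMaximal_unique ?_ fun M N hM hN hcM hcN => ?_⟩
  · exact fun htop => hc (span_singleton_eq_top.mp htop)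
  · exact IsBezout.eq_of_isMaximal_of_jacobson_span_maximal hmax hM hN
      ((span_singleton_le_iff_mem M).mp hcM) ((span_singleton_le_iff_mem N).mp hcN)

theorem exists_local_quotient_of_jNoetherian_not_sr1 (R : Type*) [CommRing R] [IsDomain R]
    [IsBezout R] (hJ : IsJNoetherian R) (hsr : ¬HasStableRangeOne R) :
    ∃ a : R, a ≠ 0 ∧ ¬IsUnit a ∧ IsLocalRing (R ⧸ Ideal.span {a}) :=
  exists_local_quotient_of_jNoetherian_not_sr1_general R hJ hsr
end

section
/- Let R be a commutative Bezout domain and let a be a nonzero nonunit element of R such that R/aR is a local ring. Then a is an adequate element of R. -/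
/-! Since `R ⧸ aR` is local, every proper ideal containing `a` lies in one proper ideal `m`
(the preimage of the maximal ideal). For `b ∈ m` the factorization `a = 1 * a` works, as every
nonunit divisor `s'` of `a` and `b` both lie in `m`; for `b ∉ m` the factorization `a = a * 1`
works, as `aR + bR` is not contained in `m` and hence is all of `R`. -/

/-- An element `a` of a commutative ring is adequate if for every `b` there exist `r, s`
with `a = r * s`, `rR + bR = R`, and `s'R + bR ≠ R` for every nonunit `s'` with
`sR ⊆ s'R`. -/
def IsAdequateElement {R : Type*} [CommRing R] (a : R) : Prop :=
  ∀ b : R, ∃ r s : R, a = r * s ∧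
    Ideal.span {r} + Ideal.span {b} = ⊤ ∧
    ∀ s' : R, ¬IsUnit s' → Ideal.span {s} ≤ Ideal.span ({s'} : Set R) →
      Ideal.span {s'} + Ideal.span {b} ≠ ⊤

theorem Ideal.le_comap_maximalIdeal_of_le {R : Type*} [CommRing R] {I J : Ideal R}
    [IsLocalRing (R ⧸ I)] (hIJ : I ≤ J) (hJ : J ≠ ⊤) :
    J ≤ (IsLocalRing.maximalIdeal (R ⧸ I)).comap (Ideal.Quotient.mk I) := by
  rw [← Ideal.map_le_iff_le_comap]
  refine IsLocalRing.le_maximalIdeal fun h => hJ ?_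
  rw [← Ideal.comap_map_mk hIJ, h, Ideal.comap_top]

theorem isAdequateElement_of_forall_le {R : Type*} [CommRing R] {a : R} (m : Ideal R)
    (hm : m ≠ ⊤) (h : ∀ J : Ideal R, Ideal.span {a} ≤ J → J ≠ ⊤ → J ≤ m) :
    IsAdequateElement a := by
  intro b
  by_cases hb : b ∈ m
  · refine ⟨1, a, (one_mul a).symm, by simp, fun s' hs' hle htop => hm ?_⟩
    have hs'm : Ideal.span {s'} ≤ m :=
      h _ hle (by rwa [Ne, Ideal.span_singleton_eq_top])
    rw [eq_top_iff, ← htop]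
    exact sup_le hs'm ((Ideal.span_singleton_le_iff_mem m).mpr hb)
  · refine ⟨a, 1, (mul_one a).symm, ?_, fun s' hs' hle => absurd ?_ hs'⟩
    · by_contra htop
      exact hb (h _ le_sup_left htop (Ideal.mem_sup_right (Ideal.mem_span_singleton_self b)))
    · rwa [Ideal.span_singleton_one, top_le_iff, Ideal.span_singleton_eq_top] at hle

theorem adequate_of_local_quotient_general {R : Type*} [CommRing R]
    (a : R)
    (hloc : IsLocalRing (R ⧸ Ideal.span {a})) :
    IsAdequateElement a :=
  isAdequateElement_of_forall_le _
    (Ideal.comap_ne_top _ (IsLocalRing.maximalIdeal.isMaximal _).ne_top)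
    fun _ => Ideal.le_comap_maximalIdeal_of_le

theorem adequate_of_local_quotient {R : Type*} [CommRing R] [IsDomain R] [IsBezout R]
    (a : R) (ha : a ≠ 0) (hu : ¬IsUnit a)
    (hloc : IsLocalRing (R ⧸ Ideal.span {a})) :
    IsAdequateElement a :=
  adequate_of_local_quotient_general a hloc
end

section
/- Let R be a Bezout domain in which every nonzero nonunit element has only finitely many prime ideals minimal over it, and let a be a nonzero nonunit element of R such that every prime ideal of R containing aR is contained in a unique maximal ideal. Then the quotient ring R/aR is isomorphic to a finite direct product of valuation rings. -/
/-- A bundled valuation ring: a commutative ring whose ideals are totally ordered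
by inclusion. -/
structure ValuationRingPkg where
  carrier : Type
  [inst : CommRing carrier]
  idealsTotallyOrdered : ∀ I J : Ideal carrier, I ≤ J ∨ J ≤ I

attribute [instance] ValuationRingPkg.inst

section Aux

variable {R : Type} [CommRing R]

/-- The saturation of an ideal `I` with respect to the complement of a prime `M`. -/
def satAux (I M : Ideal R) (hM : M.IsPrime) : Ideal R where
  carrier := {x | ∃ s, s ∉ M ∧ s * x ∈ I}
  zero_mem' := ⟨1, (Ideal.ne_top_iff_one M).1 hM.ne_top, by simp⟩
  add_mem' := by
    rintro x y ⟨s, hs, hsx⟩ ⟨t, ht, hty⟩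
    refine ⟨s * t, fun h => ((hM.mem_or_mem h).elim hs ht), ?_⟩
    have : s * t * (x + y) = t * (s * x) + s * (t * y) := by ring
    rw [this]
    exact Ideal.add_mem _ (Ideal.mul_mem_left _ _ hsx) (Ideal.mul_mem_left _ _ hty)
  smul_mem' := by
    rintro c x ⟨s, hs, hsx⟩
    refine ⟨s, hs, ?_⟩
    have : s * (c • x) = c * (s * x) := by simp only [smul_eq_mul]; ring
    rw [this]
    exact Ideal.mul_mem_left _ _ hsx

lemma mem_satAux {I M : Ideal R} {hM : M.IsPrime} {x : R} :
    x ∈ satAux I M hM ↔ ∃ s, s ∉ M ∧ s * x ∈ I := Iff.rfl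

/-- If `Q` is a minimal prime over `K` and `s ∈ Q`, then some multiple `t * s ^ N`
with `t ∉ Q` lies in `K`. -/
lemma exists_mul_pow_mem_of_minimalPrime {K Q : Ideal R} (hQ : Q ∈ K.minimalPrimes)
    {s : R} (hs : s ∈ Q) : ∃ t, t ∉ Q ∧ ∃ N : ℕ, t * s ^ N ∈ K := by
  have hQp : Q.IsPrime := hQ.1.1
  by_contra h
  push_neg at h
  set T : Submonoid R :=
    { carrier := {x | ∃ t, t ∉ Q ∧ ∃ N : ℕ, x = t * s ^ N}
      one_mem' := ⟨1, (Ideal.ne_top_iff_one Q).1 hQp.ne_top, 0, by simp⟩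
      mul_mem' := by
        rintro x y ⟨t, ht, N, rfl⟩ ⟨t', ht', N', rfl⟩
        exact ⟨t * t', fun hm => ((hQp.mem_or_mem hm).elim ht ht'), N + N', by ring⟩ } with hT
  have hdisj : Disjoint (K : Set R) (T : Set R) := by
    rw [Set.disjoint_left]
    rintro x hxK ⟨t, ht, N, rfl⟩
    exact h t ht N hxK
  obtain ⟨p, hp, hKp, hpd⟩ := Ideal.exists_le_prime_disjoint K T hdisj
  have hpQ : p ≤ Q := by
    intro x hx
    by_contra hxQ
    exact Set.disjoint_left.1 hpd hx ⟨x, hxQ, 0, by simp⟩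
  have hQp' : Q ≤ p := hQ.2 ⟨hp, hKp⟩ hpQ
  exact Set.disjoint_left.1 hpd (hQp' hs) ⟨1, (Ideal.ne_top_iff_one Q).1 hQp.ne_top, 1, by simp⟩

variable [IsDomain R] [IsBezout R]

/-- Bezout splitting: for `x ≠ 0`, write `x = d x'`, `y = d y'` with `x', y'` coprime. -/
lemma bezout_split (x y : R) (hx : x ≠ 0) :
    ∃ d x' y' u v : R, x = d * x' ∧ y = d * y' ∧ u * x' + v * y' = 1 := by
  obtain ⟨x', hx'⟩ := IsBezout.gcd_dvd_left x y
  obtain ⟨y', hy'⟩ := IsBezout.gcd_dvd_right x y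
  obtain ⟨u, v, huv⟩ := IsBezout.gcd_eq_sum x y
  have hd : IsBezout.gcd x y ≠ 0 := by
    intro h
    exact hx (by rw [hx', h, zero_mul])
  refine ⟨_, x', y', u, v, hx', hy', ?_⟩
  set g := IsBezout.gcd x y with hg
  have key : g * (u * x' + v * y') = g * 1 := by
    calc g * (u * x' + v * y') = u * (g * x') + v * (g * y') := by ring
      _ = u * x + v * y := by rw [← hx', ← hy']
      _ = g * 1 := by rw [mul_one]; exact huv
  exact mul_left_cancel₀ hd key

/-- In a Bezout domain, two incomparable primes are comaximal. -/
lemma primes_comaximal {P Q : Ideal R} (hP : P.IsPrime) (hQ : Q.IsPrime)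
    (hPQ : ¬P ≤ Q) (hQP : ¬Q ≤ P) : P ⊔ Q = ⊤ := by
  obtain ⟨p, hpP, hpQ⟩ := SetLike.not_le_iff_exists.1 hPQ
  obtain ⟨q, hqQ, hqP⟩ := SetLike.not_le_iff_exists.1 hQP
  have hp0 : p ≠ 0 := by rintro rfl; exact hpQ Q.zero_mem
  obtain ⟨d, x', y', u, v, hdx, hdy, h1⟩ := bezout_split p q hp0
  have hdP : d ∉ P := fun h => hqP (hdy ▸ Ideal.mul_mem_right _ _ h)
  have hdQ : d ∉ Q := fun h => hpQ (hdx ▸ Ideal.mul_mem_right _ _ h)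
  have hx'P : x' ∈ P := (hP.mem_or_mem (hdx ▸ hpP)).resolve_left hdP
  have hy'Q : y' ∈ Q := (hQ.mem_or_mem (hdy ▸ hqQ)).resolve_left hdQ
  rw [Ideal.eq_top_iff_one]
  exact Submodule.mem_sup.2 ⟨u * x', Ideal.mul_mem_left _ _ hx'P,
    v * y', Ideal.mul_mem_left _ _ hy'Q, h1⟩

end Aux

theorem quotient_isom_product_of_valuation_rings (R : Type) [CommRing R] [IsDomain R]
    [IsBezout R]
    (hmin : ∀ x : R, x ≠ 0 → ¬IsUnit x → (Ideal.span {x}).minimalPrimes.Finite)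
    (a : R) (ha : a ≠ 0) (hu : ¬IsUnit a)
    (huniq : ∀ P : Ideal R, P.IsPrime → Ideal.span {a} ≤ P →
      ∃! M : Ideal R, M.IsMaximal ∧ P ≤ M) :
    ∃ (n : ℕ) (V : Fin n → ValuationRingPkg),
      Nonempty ((R ⧸ Ideal.span {a}) ≃+* ∀ i, (V i).carrier) := by
  classical
  set Ia : Ideal R := Ideal.span {a} with hIa
  obtain ⟨n, ⟨e⟩⟩ : ∃ n : ℕ, Nonempty (Ia.minimalPrimes ≃ Fin n) := by
    haveI := (hmin a ha hu).fintype
    exact ⟨_, ⟨Fintype.equivFin _⟩⟩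
  set P : Fin n → Ideal R := fun i => (e.symm i : Ideal R) with hP
  have hPmem : ∀ i, P i ∈ Ia.minimalPrimes := fun i => (e.symm i).2
  have hPinj : Function.Injective P := fun i j h => by
    have := e.symm.injective (Subtype.ext h)
    exact this
  have hPsurj : ∀ Q ∈ Ia.minimalPrimes, ∃ i, P i = Q := by
    intro Q hQ
    exact ⟨e ⟨Q, hQ⟩, by simp [hP]⟩
  have hPprime : ∀ i, (P i).IsPrime := fun i => (hPmem i).1.1
  have hIaP : ∀ i, Ia ≤ P i := fun i => (hPmem i).1.2
  -- choose the unique maximal ideal above each minimal prime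
  have hMex : ∀ i : Fin n, ∃ M : Ideal R, M.IsMaximal ∧ P i ≤ M ∧
      ∀ M' : Ideal R, M'.IsMaximal → P i ≤ M' → M' = M := by
    intro i
    obtain ⟨M, ⟨hM1, hM2⟩, hM3⟩ := huniq (P i) (hPprime i) (hIaP i)
    exact ⟨M, hM1, hM2, fun M' h1 h2 => hM3 M' ⟨h1, h2⟩⟩
  choose M hMmax hPM hMuniq using hMex
  -- distinct minimal primes are comaximal
  have hcomax : ∀ i j, i ≠ j → P i ⊔ P j = ⊤ := by
    intro i j hij
    by_cases hle : P i ≤ P j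
    · exact absurd (hPinj (le_antisymm hle ((hPmem j).2 ⟨hPprime i, hIaP i⟩ hle))) hij
    by_cases hle' : P j ≤ P i
    · exact absurd (hPinj (le_antisymm hle' ((hPmem i).2 ⟨hPprime j, hIaP j⟩ hle'))).symm hij
    exact primes_comaximal (hPprime i) (hPprime j) hle hle'
  have hMinj : Function.Injective M := by
    intro i j h
    by_contra hij
    have h2 : (⊤ : Ideal R) ≤ M i := by
      rw [← hcomax i j hij]
      exact sup_le (hPM i) (h ▸ hPM j)
    exact (hMmax i).ne_top (top_le_iff.1 h2)
  -- every maximal ideal over Ia is one of the M m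
  have hmaxIa : ∀ Mx : Ideal R, Mx.IsMaximal → Ia ≤ Mx → ∃ m, Mx = M m := by
    intro Mx hMx hle
    haveI := hMx.isPrime
    obtain ⟨Q, hQ, hQle⟩ := Ideal.exists_minimalPrimes_le hle
    obtain ⟨m, rfl⟩ := hPsurj Q hQ
    exact ⟨m, hMuniq m Mx hMx hQle⟩
  -- every prime between Ia and M i contains P i
  have hprimeIa : ∀ i (Q : Ideal R), Q.IsPrime → Ia ≤ Q → Q ≤ M i → P i ≤ Q := by
    intro i Q hQ hIaQ hQM
    haveI := hQ
    obtain ⟨Q', hQ', hQ'le⟩ := Ideal.exists_minimalPrimes_le hIaQ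
    obtain ⟨m, rfl⟩ := hPsurj Q' hQ'
    have hmi : m = i := (hMinj (hMuniq m (M i) (hMmax i) (le_trans hQ'le hQM))).symm
    rw [← hmi]
    exact hQ'le
  -- the saturated ideals
  set K : Fin n → Ideal R := fun i => satAux Ia (M i) (hMmax i).isPrime with hK
  have hIaK : ∀ i, Ia ≤ K i := by
    intro i x hx
    exact ⟨1, (Ideal.ne_top_iff_one _).1 (hMmax i).isPrime.ne_top, by rwa [one_mul]⟩
  have hKP : ∀ i, K i ≤ P i := by
    rintro i x ⟨s, hs, hsx⟩
    exact ((hPprime i).mem_or_mem (hIaP i hsx)).resolve_left (fun h => hs (hPM i h))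
  -- every prime over K i contains P i
  have hKprime : ∀ i (Q : Ideal R), Q.IsPrime → K i ≤ Q → P i ≤ Q := by
    intro i Q hQ hKQ
    haveI := hQ
    obtain ⟨Q', hQ'min, hQ'le⟩ := Ideal.exists_minimalPrimes_le hKQ
    have hQ'prime : Q'.IsPrime := hQ'min.1.1
    have hQ'M : Q' ≤ M i := by
      intro s hs
      by_contra hsM
      obtain ⟨t, ht, N, htN⟩ := exists_mul_pow_mem_of_minimalPrime hQ'min hs
      obtain ⟨s', hs', hs'e⟩ := htN
      have htK : t ∈ K i := by
        refine ⟨s' * s ^ N, fun h => ((hMmax i).isPrime.mem_or_mem h).elim hs'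
          (fun h2 => hsM ((hMmax i).isPrime.mem_of_pow_mem _ h2)), ?_⟩
        have : s' * s ^ N * t = s' * (t * s ^ N) := by ring
        rw [this]
        exact hs'e
      exact ht (hQ'min.1.2 htK)
    exact le_trans (hprimeIa i Q' hQ'prime (le_trans (hIaK i) hQ'min.1.2) hQ'M) hQ'le
  have hKmax : ∀ i (Mx : Ideal R), Mx.IsMaximal → K i ≤ Mx → Mx = M i := fun i Mx h hle =>
    hMuniq i Mx h (hKprime i Mx h.isPrime hle)
  -- the K i are pairwise comaximal
  have hKcomax : ∀ i j, i ≠ j → K i ⊔ K j = ⊤ := by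
    intro i j hij
    by_contra hne
    obtain ⟨Mx, hMx, hleMx⟩ := Ideal.exists_le_maximal _ hne
    have h1 : Mx = M i := hKmax i Mx hMx (le_trans le_sup_left hleMx)
    have h2 : Mx = M j := hKmax j Mx hMx (le_trans le_sup_right hleMx)
    exact hij (hMinj (h1 ▸ h2))
  -- the intersection of the K i is Ia
  have hKinf : (⨅ i, K i) = Ia := by
    apply le_antisymm
    · intro x hx
      by_contra hxIa
      set Cx : Ideal R := Ia.colon (Ideal.span {x}) with hCx
      have hCxne : Cx ≠ ⊤ := by
        intro h
        have h1 : (1 : R) ∈ Cx := h ▸ Submodule.mem_top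
        have h2 := Ideal.mem_colon_span_singleton.1 h1
        rw [one_mul] at h2
        exact hxIa h2
      obtain ⟨Mx, hMx, hleMx⟩ := Ideal.exists_le_maximal Cx hCxne
      have hIaMx : Ia ≤ Mx := by
        refine le_trans ?_ hleMx
        intro y hy
        exact Ideal.mem_colon_span_singleton.2 (Ideal.mul_mem_right _ _ hy)
      obtain ⟨m, rfl⟩ := hmaxIa Mx hMx hIaMx
      have hxK : x ∈ K m := by
        have := Submodule.mem_iInf (fun i => K i) |>.1 hx m
        exact this
      obtain ⟨s, hs, hsx⟩ := hxK
      exact hs (hleMx (Ideal.mem_colon_span_singleton.2 hsx))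
    · exact le_iInf fun i => hIaK i
  -- units in the quotient
  have hunit : ∀ i (x : R), x ∉ M i → IsUnit (Ideal.Quotient.mk (K i) x) := by
    intro i x hx
    by_contra hnu
    have hne : Ideal.span {Ideal.Quotient.mk (K i) x} ≠ ⊤ := fun h =>
      hnu (Ideal.span_singleton_eq_top.1 h)
    obtain ⟨Mx, hMx, hleMx⟩ := Ideal.exists_le_maximal _ hne
    haveI := hMx
    have hcom : (Ideal.comap (Ideal.Quotient.mk (K i)) Mx).IsMaximal :=
      Ideal.comap_isMaximal_of_surjective _ Ideal.Quotient.mk_surjective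
    have hKle : K i ≤ Ideal.comap (Ideal.Quotient.mk (K i)) Mx := by
      intro z hz
      rw [Ideal.mem_comap, Ideal.Quotient.eq_zero_iff_mem.2 hz]
      exact Mx.zero_mem
    have hMxe : Ideal.comap (Ideal.Quotient.mk (K i)) Mx = M i := hKmax i _ hcom hKle
    apply hx
    rw [← hMxe]
    exact Ideal.mem_comap.2 (hleMx (Ideal.subset_span rfl))
  -- divisibility is total in the quotient
  have hdvd : ∀ i (x y : R),
      Ideal.Quotient.mk (K i) y ∈ Ideal.span {Ideal.Quotient.mk (K i) x} ∨
      Ideal.Quotient.mk (K i) x ∈ Ideal.span {Ideal.Quotient.mk (K i) y} := by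
    intro i x y
    have key : ∀ x y d x' y' : R, x = d * x' → y = d * y' → x' ∉ M i →
        Ideal.Quotient.mk (K i) y ∈ Ideal.span {Ideal.Quotient.mk (K i) x} := by
      intro x y d x' y' hdx hdy hx'
      obtain ⟨w, hw⟩ := hunit i x' hx'
      refine Ideal.mem_span_singleton.2 ⟨↑w⁻¹ * Ideal.Quotient.mk (K i) y', ?_⟩
      have hxe : Ideal.Quotient.mk (K i) x = Ideal.Quotient.mk (K i) d * ↑w := by
        rw [hw, ← map_mul, ← hdx]
      have hwinv : (↑w * ↑w⁻¹ : R ⧸ K i) = 1 := w.mul_inv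
      calc Ideal.Quotient.mk (K i) y
          = Ideal.Quotient.mk (K i) d * Ideal.Quotient.mk (K i) y' := by
            rw [← map_mul, ← hdy]
        _ = Ideal.Quotient.mk (K i) d * (↑w * ↑w⁻¹) * Ideal.Quotient.mk (K i) y' := by
            rw [hwinv, mul_one]
        _ = Ideal.Quotient.mk (K i) x * (↑w⁻¹ * Ideal.Quotient.mk (K i) y') := by
            rw [hxe]; ring
    by_cases hy0 : y = 0
    · left; rw [hy0, map_zero]; exact Submodule.zero_mem _
    by_cases hx0 : x = 0
    · right; rw [hx0, map_zero]; exact Submodule.zero_mem _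
    obtain ⟨d, x', y', u, v, hdx, hdy, h1⟩ := bezout_split x y hx0
    have hnotboth : x' ∉ M i ∨ y' ∉ M i := by
      by_contra h
      push_neg at h
      exact (hMmax i).ne_top ((Ideal.eq_top_iff_one _).2 (h1 ▸ Ideal.add_mem _
        (Ideal.mul_mem_left _ u h.1) (Ideal.mul_mem_left _ v h.2)))
    rcases hnotboth with h | h
    · exact Or.inl (key x y d x' y' hdx hdy h)
    · exact Or.inr (key y x d y' x' hdy hdx h)
  -- ideals in the quotient are totally ordered
  have htotal : ∀ i (I' J' : Ideal (R ⧸ K i)), I' ≤ J' ∨ J' ≤ I' := by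
    intro i I' J'
    by_cases h : I' ≤ J'
    · exact Or.inl h
    right
    obtain ⟨w, hwI, hwJ⟩ := SetLike.not_le_iff_exists.1 h
    intro z hz
    obtain ⟨x, rfl⟩ := Ideal.Quotient.mk_surjective z
    obtain ⟨y, rfl⟩ := Ideal.Quotient.mk_surjective w
    rcases hdvd i y x with hc | hc
    · exact ((Ideal.span_singleton_le_iff_mem _).2 hwI) hc
    · exact absurd (((Ideal.span_singleton_le_iff_mem _).2 hz) hc) hwJ
  refine ⟨n, fun i => ⟨R ⧸ K i, htotal i⟩, ⟨?_⟩⟩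
  have hpair : Pairwise (Function.onFun IsCoprime K) := fun i j hij =>
    (Ideal.isCoprime_iff_sup_eq).2 (hKcomax i j hij)
  exact (Ideal.quotEquivOfEq hKinf.symm).trans (Ideal.quotientInfRingEquivPiQuotient K hpair)
end

section
/- Let R be a commutative ring which is a finite direct product of valuation rings. Then R is a Bezout ring and every element a of R (including zero) is adequate, i.e. R is everywhere adequate. -/
/-- In a chain ring, the sum of two nonunits is a nonunit. -/
lemma chain_add_nonunit {R : Type*} [CommRing R]
    (h : ∀ I J : Ideal R, I ≤ J ∨ J ≤ I) {x y : R}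
    (hx : ¬ IsUnit x) (hy : ¬ IsUnit y) : ¬ IsUnit (x + y) := by
  rcases h (Ideal.span {x}) (Ideal.span {y}) with hle | hle
  · obtain ⟨c, rfl⟩ := Ideal.span_singleton_le_span_singleton.mp hle
    intro hu
    have hxy : y * c + y = y * (c + 1) := by ring
    rw [hxy] at hu
    exact hy (isUnit_of_mul_isUnit_left hu)
  · obtain ⟨c, rfl⟩ := Ideal.span_singleton_le_span_singleton.mp hle
    intro hu
    have hxy : x + x * c = x * (1 + c) := by ring
    rw [hxy] at hu
    exact hx (isUnit_of_mul_isUnit_left hu)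

theorem product_of_valuation_rings_everywhere_adequate (n : ℕ) (S : Fin n → Type*)
    [∀ i, CommRing (S i)]
    (hval : ∀ i, ∀ I J : Ideal (S i), I ≤ J ∨ J ≤ I) :
    IsBezout (∀ i, S i) ∧ ∀ a : ∀ i, S i, IsAdequateElement a := by
  classical
  constructor
  · rw [IsBezout.iff_span_pair_isPrincipal]
    intro x y
    set d : ∀ i, S i := fun i =>
      if Ideal.span {y i} ≤ Ideal.span {x i} then x i else y i with hd
    have hdx : d ∣ x := by
      have hdvd : ∀ i, d i ∣ x i := by
        intro i
        by_cases hle : Ideal.span {y i} ≤ Ideal.span {x i}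
        · simp [hd, hle, -Submodule.span_singleton_le_iff_mem]
        · have := (hval i (Ideal.span {x i}) (Ideal.span {y i})).resolve_right hle
          simpa [hd, hle, -Submodule.span_singleton_le_iff_mem] using Ideal.span_singleton_le_span_singleton.mp this
      exact ⟨fun i => (hdvd i).choose, funext fun i => (hdvd i).choose_spec⟩
    have hdy : d ∣ y := by
      have hdvd : ∀ i, d i ∣ y i := by
        intro i
        by_cases hle : Ideal.span {y i} ≤ Ideal.span {x i}
        · simpa [hd, hle, -Submodule.span_singleton_le_iff_mem] using Ideal.span_singleton_le_span_singleton.mp hle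
        · simp [hd, hle, -Submodule.span_singleton_le_iff_mem]
      exact ⟨fun i => (hdvd i).choose, funext fun i => (hdvd i).choose_spec⟩
    refine ⟨⟨d, le_antisymm ?_ ?_⟩⟩
    · rw [Ideal.span_le]
      rintro z (rfl | rfl)
      · exact Ideal.mem_span_singleton.mpr hdx
      · exact Ideal.mem_span_singleton.mpr hdy
    · have : d ∈ Ideal.span ({x, y} : Set (∀ i, S i)) := by
        rw [Ideal.mem_span_pair]
        refine ⟨fun i => if Ideal.span {y i} ≤ Ideal.span {x i} then 1 else 0,
          fun i => if Ideal.span {y i} ≤ Ideal.span {x i} then 0 else 1, funext fun i => ?_⟩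
        by_cases hle : Ideal.span {y i} ≤ Ideal.span {x i} <;> simp [hd, hle, -Submodule.span_singleton_le_iff_mem]
      exact (Ideal.span_singleton_le_iff_mem _).mpr this
  · intro a b
    refine ⟨fun i => if IsUnit (b i) then a i else 1,
      fun i => if IsUnit (b i) then 1 else a i, funext fun i => ?_, ?_, ?_⟩
    · by_cases hu : IsUnit (b i) <;> simp [hu]
    · rw [Ideal.eq_top_iff_one, Submodule.add_eq_sup, Submodule.mem_sup]
      refine ⟨fun i => if IsUnit (b i) then 0 else 1, ?_,
        fun i => if IsUnit (b i) then 1 else 0, ?_, ?_⟩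
      · rw [Ideal.mem_span_singleton]
        refine ⟨fun i => if IsUnit (b i) then 0 else 1, funext fun i => ?_⟩
        by_cases hu : IsUnit (b i) <;> simp [hu]
      · rw [Ideal.mem_span_singleton]
        refine ⟨fun i => if h : IsUnit (b i) then ↑h.unit⁻¹ else 0, funext fun i => ?_⟩
        show (if IsUnit (b i) then (1:S i) else 0)
            = b i * (if h : IsUnit (b i) then ↑h.unit⁻¹ else 0)
        by_cases hu : IsUnit (b i)
        · rw [if_pos hu, dif_pos hu, hu.mul_val_inv]
        · simp [hu]
      · funext i
        by_cases hu : IsUnit (b i) <;> simp [hu]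
    · intro s' hs' hle hcon
      obtain ⟨i, hi⟩ : ∃ i, ¬ IsUnit (s' i) := by
        by_contra hall
        push_neg at hall
        refine hs' (IsUnit.of_mul_eq_one (fun i => ↑(hall i).unit⁻¹) (funext fun i => ?_))
        exact (hall i).mul_val_inv
      obtain ⟨c, hc⟩ := Ideal.span_singleton_le_span_singleton.mp hle
      have hci : (if IsUnit (b i) then (1 : S i) else a i) = s' i * c i := congrFun hc i
      rw [Ideal.eq_top_iff_one, Submodule.add_eq_sup, Submodule.mem_sup] at hcon
      obtain ⟨u, hu, v, hv, huv⟩ := hcon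
      rw [Ideal.mem_span_singleton] at hu hv
      obtain ⟨u', rfl⟩ := hu
      obtain ⟨v', rfl⟩ := hv
      have h1 : s' i * u' i + b i * v' i = 1 := congrFun huv i
      by_cases hb : IsUnit (b i)
      · rw [if_pos hb] at hci
        exact hi (isUnit_of_mul_isUnit_left (hci ▸ isUnit_one))
      · have hsu : ¬ IsUnit (s' i * u' i) := fun h => hi (isUnit_of_mul_isUnit_left h)
        have hbv : ¬ IsUnit (b i * v' i) := fun h => hb (isUnit_of_mul_isUnit_left h)
        exact chain_add_nonunit (hval i) hsu hbv (h1 ▸ isUnit_one)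
end

section
/- Let R be a Bezout domain in which every nonzero nonunit element has only finitely many prime ideals minimal over it, and let a be a nonzero nonunit element of R. Then the quotient ring R/aR is everywhere adequate if and only if R/aR is isomorphic to a finite direct product of valuation rings. -/
theorem span_add_span_top_iff {S : Type*} [CommRing S] (r b : S) :
    Ideal.span {r} + Ideal.span {b} = ⊤ ↔ IsCoprime r b := by
  rw [Submodule.add_eq_sup, ← Ideal.isCoprime_iff_sup_eq, Ideal.isCoprime_span_singleton_iff]

theorem isAdequateElement_iff {S : Type*} [CommRing S] (a : S) :
    IsAdequateElement a ↔ ∀ b : S, ∃ r s : S, a = r * s ∧ IsCoprime r b ∧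
      ∀ s' : S, ¬IsUnit s' → s' ∣ s → ¬IsCoprime s' b := by
  unfold IsAdequateElement
  refine forall_congr' fun b => exists_congr fun r => exists_congr fun s => ?_
  rw [span_add_span_top_iff]
  refine and_congr_right fun _ => and_congr_right fun _ => forall_congr' fun s' => ?_
  rw [Ideal.span_singleton_le_span_singleton, Ne, span_add_span_top_iff]

theorem pi_isUnit_iff {ι : Type*} {S : ι → Type*} [∀ i, CommRing (S i)] (x : ∀ i, S i) :
    IsUnit x ↔ ∀ i, IsUnit (x i) := by
  constructor
  · intro h i; exact h.map (Pi.evalRingHom S i)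
  · intro h
    choose y hy using fun i => (h i).exists_right_inv
    exact IsUnit.of_mul_eq_one (a := x) y (funext hy)

theorem adequate_of_ideal_chain {S : Type*} [CommRing S]
    (h : ∀ I J : Ideal S, I ≤ J ∨ J ≤ I) (x : S) : IsAdequateElement x := by
  rw [isAdequateElement_iff]
  intro b
  by_cases hb : IsUnit b
  · obtain ⟨v, hv⟩ := hb.exists_left_inv
    refine ⟨x, 1, (mul_one x).symm, ⟨0, v, by rw [hv]; ring⟩, ?_⟩
    intro s' hs' hdvd _
    exact hs' (isUnit_of_dvd_one hdvd)
  · refine ⟨1, x, (one_mul x).symm, isCoprime_one_left, ?_⟩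
    intro s' hs' _ hcop
    obtain ⟨p, q, hpq⟩ := hcop
    rcases h (Ideal.span {s'}) (Ideal.span {b}) with hle | hle
    · obtain ⟨c, hc⟩ := Ideal.mem_span_singleton.mp (hle (Ideal.mem_span_singleton_self s'))
      refine hb (IsUnit.of_mul_eq_one (a := b) (p * c + q) ?_)
      rw [hc] at hpq; linear_combination hpq
    · obtain ⟨c, hc⟩ := Ideal.mem_span_singleton.mp (hle (Ideal.mem_span_singleton_self b))
      refine hs' (IsUnit.of_mul_eq_one (a := s') (p + q * c) ?_)
      rw [hc] at hpq; linear_combination hpq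

theorem adequate_pi {ι : Type*} {S : ι → Type*} [∀ i, CommRing (S i)]
    (h : ∀ i, ∀ x : S i, IsAdequateElement x) (x : ∀ i, S i) : IsAdequateElement x := by
  rw [isAdequateElement_iff]
  intro b
  choose r s h1 h2 h3 using fun i => (isAdequateElement_iff (x i)).mp (h i (x i)) (b i)
  choose p q hpq using h2
  refine ⟨r, s, funext h1, ⟨p, q, funext hpq⟩, ?_⟩
  intro s' hs' hdvd hcop
  rw [pi_isUnit_iff] at hs'
  push_neg at hs'
  obtain ⟨i, hi⟩ := hs'
  obtain ⟨c, rfl⟩ := hdvd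
  exact h3 i (s' i) hi ⟨c i, rfl⟩ (hcop.map (Pi.evalRingHom S i))

theorem isAdequateElement_map {S T : Type*} [CommRing S] [CommRing T] (e : S ≃+* T) {x : S}
    (h : IsAdequateElement x) : IsAdequateElement (e x) := by
  rw [isAdequateElement_iff] at h ⊢
  intro b
  obtain ⟨r, s, h1, h2, h3⟩ := h (e.symm b)
  refine ⟨e r, e s, by rw [h1, map_mul], ?_, ?_⟩
  · obtain ⟨c, d, hcd⟩ := h2
    refine ⟨e c, e d, ?_⟩
    have h4 := congrArg e hcd
    rw [map_add, map_mul, map_mul, map_one, RingEquiv.apply_symm_apply] at h4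
    exact h4
  · intro s' hs' hdvd hcop
    have hnu : ¬IsUnit (e.symm s') := fun hu => hs' (by simpa using hu.map e)
    have hdv : e.symm s' ∣ s := by
      obtain ⟨c, hc⟩ := hdvd
      refine ⟨e.symm c, ?_⟩
      have := congrArg e.symm hc
      rwa [RingEquiv.symm_apply_apply, map_mul] at this
    have hco : IsCoprime (e.symm s') (e.symm b) := by
      obtain ⟨c, d, hcd⟩ := hcop
      refine ⟨e.symm c, e.symm d, ?_⟩
      have h4 := congrArg e.symm hcd
      rw [map_add, map_mul, map_mul, map_one] at h4
      exact h4
    exact h3 (e.symm s') hnu hdv hco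

theorem chain_of_local_bezout (T : Type*) [CommRing T] [IsBezout T] [IsLocalRing T]
    (I J : Ideal T) : I ≤ J ∨ J ≤ I := by
  have key : ∀ x y : T, x ∈ Ideal.span ({y} : Set T) ∨ y ∈ Ideal.span ({x} : Set T) := by
    intro x y
    obtain ⟨α, β, hd⟩ := IsBezout.gcd_eq_sum x y
    obtain ⟨x', hx'⟩ := IsBezout.gcd_dvd_left x y
    obtain ⟨y', hy'⟩ := IsBezout.gcd_dvd_right x y
    set d := IsBezout.gcd x y with hdd
    have ht : d * (1 - (α * x' + β * y')) = 0 := by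
      calc d * (1 - (α * x' + β * y')) = d - (α * (d * x') + β * (d * y')) := by ring
        _ = d - (α * x + β * y) := by rw [← hx', ← hy']
        _ = 0 := by rw [hd, sub_self]
    have hone : IsUnit ((α * x' + β * y') + (1 - (α * x' + β * y'))) := by
      rw [show (α * x' + β * y') + (1 - (α * x' + β * y')) = 1 by ring]
      exact isUnit_one
    rcases IsLocalRing.isUnit_or_isUnit_of_isUnit_add hone with hz | hz
    · rcases IsLocalRing.isUnit_or_isUnit_of_isUnit_add hz with hxx | hyy
      · have hx'u : IsUnit x' := isUnit_of_mul_isUnit_right hxx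
        right
        rw [Ideal.mem_span_singleton]
        obtain ⟨u, hu⟩ := hx'u
        have hxd : x ∣ d := ⟨↑u⁻¹, by rw [hx', ← hu, mul_assoc, Units.mul_inv, mul_one]⟩
        exact dvd_trans hxd ⟨y', hy'⟩
      · have hy'u : IsUnit y' := isUnit_of_mul_isUnit_right hyy
        left
        rw [Ideal.mem_span_singleton]
        obtain ⟨u, hu⟩ := hy'u
        have hyd : y ∣ d := ⟨↑u⁻¹, by rw [hy', ← hu, mul_assoc, Units.mul_inv, mul_one]⟩
        exact dvd_trans hyd ⟨x', hx'⟩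
    · left
      obtain ⟨u, hu⟩ := hz
      have hd0 : d = 0 := by
        have h1 : d = d * (1 - (α * x' + β * y')) * ↑u⁻¹ := by
          rw [← hu, mul_assoc, Units.mul_inv, mul_one]
        rw [h1, ht, zero_mul]
      rw [hx', hd0, zero_mul]
      exact Submodule.zero_mem _
  by_cases h : I ≤ J
  · exact Or.inl h
  · right
    obtain ⟨x, hxI, hxJ⟩ := SetLike.not_le_iff_exists.mp h
    intro y hy
    rcases key x y with hx | hy'
    · exact absurd ((Ideal.span_singleton_le_iff_mem _).mpr hy hx) hxJ
    · exact (Ideal.span_singleton_le_iff_mem _).mpr hxI hy'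

theorem prod_decomp (S : Type) [CommRing S] [IsBezout S] [Nontrivial S]
    (hfin : (minimalPrimes S).Finite)
    (had : ∀ x : S, IsAdequateElement x) :
    ∃ (n : ℕ) (V : Fin n → ValuationRingPkg), Nonempty (S ≃+* ∀ i, (V i).carrier) := by
  classical
  -- Key lemma from adequacy of 0.
  have L : ∀ u v : S, u + v = 1 → ∃ r s : S, r * s = 0 ∧ IsCoprime r u ∧ IsCoprime s v := by
    intro u v huv
    obtain ⟨r, s, h1, h2, h3⟩ := (isAdequateElement_iff (0 : S)).mp (had 0) u
    refine ⟨r, s, h1.symm, h2, ?_⟩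
    obtain ⟨α, β, hab⟩ := IsBezout.gcd_eq_sum s v
    by_cases hdu : IsUnit (IsBezout.gcd s v)
    · obtain ⟨w, hw⟩ := hdu.exists_left_inv
      refine ⟨w * α, w * β, ?_⟩
      calc w * α * s + w * β * v = w * (α * s + β * v) := by ring
        _ = 1 := by rw [hab, hw]
    · exfalso
      obtain ⟨w, hw⟩ := IsBezout.gcd_dvd_right s v
      have hcop : IsCoprime (IsBezout.gcd s v) u := by
        refine ⟨w, 1, ?_⟩
        rw [one_mul, mul_comm w, ← hw, add_comm, huv]
      exact h3 (IsBezout.gcd s v) hdu (IsBezout.gcd_dvd_left s v) hcop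
  -- PM: a prime is contained in a unique maximal ideal.
  have PM : ∀ (P M₁ M₂ : Ideal S), P.IsPrime → M₁.IsMaximal → M₂.IsMaximal →
      P ≤ M₁ → P ≤ M₂ → M₁ = M₂ := by
    intro P M₁ M₂ hP hM₁ hM₂ h₁ h₂
    by_contra hne
    obtain ⟨u, hu, v, hv, huv⟩ := Ideal.isCoprime_iff_exists.mp (Ideal.isCoprime_iff_sup_eq.mpr (hM₁.coprime_of_ne hM₂ hne))
    obtain ⟨r, s, hrs, hru, hsv⟩ := L u v huv
    have h0 : r * s ∈ P := by rw [hrs]; exact P.zero_mem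
    rcases hP.mem_or_mem h0 with hr | hs
    · obtain ⟨c, e, hce⟩ := hru
      have h1' : (1 : S) ∈ M₁ := by
        rw [← hce]
        exact M₁.add_mem (M₁.mul_mem_left c (h₁ hr)) (M₁.mul_mem_left e hu)
      exact hM₁.ne_top ((Ideal.eq_top_iff_one _).mpr h1')
    · obtain ⟨c, e, hce⟩ := hsv
      have h1' : (1 : S) ∈ M₂ := by
        rw [← hce]
        exact M₂.add_mem (M₂.mul_mem_left c (h₂ hs)) (M₂.mul_mem_left e hv)
      exact hM₂.ne_top ((Ideal.eq_top_iff_one _).mpr h1')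
  -- Comparability of primes below a common proper ideal (uses only Bezout).
  have comp : ∀ (P Q M : Ideal S), P.IsPrime → Q.IsPrime → M ≠ ⊤ → P ≤ M → Q ≤ M →
      P ≤ Q ∨ Q ≤ P := by
    intro P Q M hP hQ hM hPM hQM
    by_contra hcon
    push_neg at hcon
    obtain ⟨h1, h2⟩ := hcon
    obtain ⟨p, hpP, hpQ⟩ := SetLike.not_le_iff_exists.mp h1
    obtain ⟨q, hqQ, hqP⟩ := SetLike.not_le_iff_exists.mp h2
    obtain ⟨α, β, hd⟩ := IsBezout.gcd_eq_sum p q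
    obtain ⟨p', hp'⟩ := IsBezout.gcd_dvd_left p q
    obtain ⟨q', hq'⟩ := IsBezout.gcd_dvd_right p q
    set d := IsBezout.gcd p q with hdd
    have ht : d * (1 - (α * p' + β * q')) = 0 := by
      calc d * (1 - (α * p' + β * q')) = d - (α * (d * p') + β * (d * q')) := by ring
        _ = d - (α * p + β * q) := by rw [← hp', ← hq']
        _ = 0 := by rw [hd, sub_self]
    have hdQ : d ∉ Q := fun h => hpQ (hp' ▸ Q.mul_mem_right p' h)
    have hdP : d ∉ P := fun h => hqP (hq' ▸ P.mul_mem_right q' h)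
    have htQ : (1 - (α * p' + β * q')) ∈ Q := by
      have h0 : d * (1 - (α * p' + β * q')) ∈ Q := by rw [ht]; exact Q.zero_mem
      exact (hQ.mem_or_mem h0).resolve_left hdQ
    have htP : (1 - (α * p' + β * q')) ∈ P := by
      have h0 : d * (1 - (α * p' + β * q')) ∈ P := by rw [ht]; exact P.zero_mem
      exact (hP.mem_or_mem h0).resolve_left hdP
    have hp'M : p' ∈ M := by
      by_contra hp'M
      have hp'P : p' ∉ P := fun h => hp'M (hPM h)
      have hdpP : d * p' ∈ P := hp' ▸ hpP
      rcases hP.mem_or_mem hdpP with h | h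
      exacts [hdP h, hp'P h]
    have hq'M : q' ∈ M := by
      by_contra hq'M
      have hq'Q : q' ∉ Q := fun h => hq'M (hQM h)
      have hdqQ : d * q' ∈ Q := hq' ▸ hqQ
      rcases hQ.mem_or_mem hdqQ with h | h
      exacts [hdQ h, hq'Q h]
    apply hM
    rw [Ideal.eq_top_iff_one]
    have hsum : (1 : S) = (1 - (α * p' + β * q')) + (α * p' + β * q') := by ring
    rw [hsum]
    exact M.add_mem (hPM htP) (M.add_mem (M.mul_mem_left α hp'M) (M.mul_mem_left β hq'M))
  -- Distinct minimal primes are never below a common proper ideal.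
  have min_unique : ∀ (P Q : Ideal S), P ∈ minimalPrimes S → Q ∈ minimalPrimes S →
      ∀ M : Ideal S, M ≠ ⊤ → P ≤ M → Q ≤ M → P = Q := by
    intro P Q hP hQ M hM hPM hQM
    rcases comp P Q M hP.1.1 hQ.1.1 hM hPM hQM with h | h
    · exact le_antisymm h (hQ.2 ⟨hP.1.1, bot_le⟩ h)
    · exact le_antisymm (hP.2 ⟨hQ.1.1, bot_le⟩ h) h
  haveI ftype := hfin.fintype
  -- For each minimal prime, an idempotent-like element cutting out its component.
  have key : ∀ i : ↥(minimalPrimes S), ∃ g : S,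
      (∀ Q : Ideal S, Q.IsPrime → (i : Ideal S) ≤ Q → g ∈ Q) ∧
      (∀ Q : Ideal S, Q.IsPrime → ∀ j : ↥(minimalPrimes S), j ≠ i → (j : Ideal S) ≤ Q → g ∉ Q) ∧
      g * (1 - g) = 0 := by
    intro i
    have hco : IsCoprime (i : Ideal S) (⨅ j ∈ Finset.univ.erase i, (j : Ideal S)) := by
      apply Ideal.isCoprime_biInf
      intro j hj
      rw [Ideal.isCoprime_iff_sup_eq]
      by_contra hne
      obtain ⟨M, hM, hle⟩ := Ideal.exists_le_maximal _ hne
      have heq := min_unique (i : Ideal S) (j : Ideal S) i.2 j.2 M hM.ne_top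
        (le_trans le_sup_left hle) (le_trans le_sup_right hle)
      exact Finset.ne_of_mem_erase hj (Subtype.ext heq.symm)
    obtain ⟨u, hu, v, hv, huv⟩ := Ideal.isCoprime_iff_exists.mp hco
    have hvmem : ∀ j : ↥(minimalPrimes S), j ≠ i → v ∈ (j : Ideal S) := by
      intro j hj
      have hv' : v ∈ ⨅ j ∈ Finset.univ.erase i, (j : Ideal S) := hv
      simp only [Ideal.mem_iInf] at hv'
      exact hv' j (Finset.mem_erase.mpr ⟨hj, Finset.mem_univ j⟩)
    obtain ⟨r, s, hrs, hru, hsv⟩ := L u v huv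
    have hcrs : IsCoprime r s := by
      rw [← Ideal.isCoprime_span_singleton_iff, Ideal.isCoprime_iff_sup_eq]
      by_contra hne
      obtain ⟨M, hM, hle⟩ := Ideal.exists_le_maximal _ hne
      haveI := hM.isPrime
      have hrM : r ∈ M := hle (Ideal.mem_sup_left (Ideal.mem_span_singleton_self r))
      have hsM : s ∈ M := hle (Ideal.mem_sup_right (Ideal.mem_span_singleton_self s))
      obtain ⟨P0, hP0, hP0M⟩ := Ideal.exists_minimalPrimes_le (bot_le : (⊥ : Ideal S) ≤ M)
      by_cases hji : (⟨P0, hP0⟩ : ↥(minimalPrimes S)) = i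
      · have hPi : P0 = (i : Ideal S) := Subtype.ext_iff.mp hji
        have huM : u ∈ M := hP0M (by rw [hPi]; exact hu)
        obtain ⟨c, e, hce⟩ := hru
        refine hM.ne_top ((Ideal.eq_top_iff_one _).mpr ?_)
        rw [← hce]
        exact M.add_mem (M.mul_mem_left c hrM) (M.mul_mem_left e huM)
      · have hvM : v ∈ M := hP0M (hvmem ⟨P0, hP0⟩ hji)
        obtain ⟨c, e, hce⟩ := hsv
        refine hM.ne_top ((Ideal.eq_top_iff_one _).mpr ?_)
        rw [← hce]
        exact M.add_mem (M.mul_mem_left c hsM) (M.mul_mem_left e hvM)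
    obtain ⟨c, e, hce⟩ := hcrs
    refine ⟨e * s, ?_, ?_, ?_⟩
    · intro Q hQ hiQ
      have h0 : r * s ∈ Q := by rw [hrs]; exact Q.zero_mem
      rcases hQ.mem_or_mem h0 with hr | hs
      · exfalso
        obtain ⟨c', e', h'⟩ := hru
        refine hQ.ne_top ((Ideal.eq_top_iff_one _).mpr ?_)
        rw [← h']
        exact Q.add_mem (Q.mul_mem_left c' hr) (Q.mul_mem_left e' (hiQ hu))
      · exact Q.mul_mem_left e hs
    · intro Q hQ j hji hjQ hmem
      have hvQ : v ∈ Q := hjQ (hvmem j hji)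
      have hsQ : s ∉ Q := by
        intro h
        obtain ⟨c', e', h'⟩ := hsv
        refine hQ.ne_top ((Ideal.eq_top_iff_one _).mpr ?_)
        rw [← h']
        exact Q.add_mem (Q.mul_mem_left c' h) (Q.mul_mem_left e' hvQ)
      have hrQ : r ∈ Q := by
        have h0 : r * s ∈ Q := by rw [hrs]; exact Q.zero_mem
        exact (hQ.mem_or_mem h0).resolve_right hsQ
      refine hQ.ne_top ((Ideal.eq_top_iff_one _).mpr ?_)
      rw [← hce]
      exact Q.add_mem (Q.mul_mem_left c hrQ) hmem
    · have h1 : 1 - e * s = c * r := by linear_combination -hce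
      rw [h1]
      calc e * s * (c * r) = e * c * (r * s) := by ring
        _ = 0 := by rw [hrs, mul_zero]
  choose g hg1 hg2 hg3 using key
  -- pairwise coprimality of the spans
  have hpair : Pairwise (Function.onFun IsCoprime fun i : ↥(minimalPrimes S) => Ideal.span {g i}) := by
    intro i j hij
    simp only [Function.onFun]
    rw [Ideal.isCoprime_iff_sup_eq]
    by_contra hne
    obtain ⟨M, hM, hle⟩ := Ideal.exists_le_maximal _ hne
    haveI := hM.isPrime
    obtain ⟨P0, hP0, hP0M⟩ := Ideal.exists_minimalPrimes_le (bot_le : (⊥ : Ideal S) ≤ M)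
    have hgiM : g i ∈ M := hle (Ideal.mem_sup_left (Ideal.mem_span_singleton_self _))
    have hgjM : g j ∈ M := hle (Ideal.mem_sup_right (Ideal.mem_span_singleton_self _))
    by_cases hki : (⟨P0, hP0⟩ : ↥(minimalPrimes S)) = i
    · exact hg2 j M hM.isPrime ⟨P0, hP0⟩ (by rw [hki]; exact hij) hP0M hgjM
    · exact hg2 i M hM.isPrime ⟨P0, hP0⟩ hki hP0M hgiM
  -- the infimum of the spans is ⊥
  have hinf : (⨅ i : ↥(minimalPrimes S), Ideal.span {g i}) = ⊥ := by
    rw [eq_bot_iff]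
    intro x hx
    simp only [Ideal.mem_iInf] at hx
    have htop : Ideal.span (Set.range fun i : ↥(minimalPrimes S) => 1 - g i) = ⊤ := by
      by_contra hne
      obtain ⟨M, hM, hle⟩ := Ideal.exists_le_maximal _ hne
      haveI := hM.isPrime
      obtain ⟨P0, hP0, hP0M⟩ := Ideal.exists_minimalPrimes_le (bot_le : (⊥ : Ideal S) ≤ M)
      have h1 : 1 - g ⟨P0, hP0⟩ ∈ M := hle (Ideal.subset_span ⟨⟨P0, hP0⟩, rfl⟩)
      have h2 : g ⟨P0, hP0⟩ ∈ M := hg1 ⟨P0, hP0⟩ M hM.isPrime hP0M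
      refine hM.ne_top ((Ideal.eq_top_iff_one _).mpr ?_)
      have := M.add_mem h1 h2
      rwa [sub_add_cancel] at this
    have hone : (1 : S) ∈ Ideal.span (Set.range fun i : ↥(minimalPrimes S) => 1 - g i) := by
      rw [htop]; trivial
    obtain ⟨c, hc⟩ := Ideal.mem_span_range_iff_exists_fun.mp hone
    have hzero : ∀ i : ↥(minimalPrimes S), (1 - g i) * x = 0 := by
      intro i
      obtain ⟨y, hy⟩ := Ideal.mem_span_singleton.mp (hx i)
      calc (1 - g i) * x = g i * (1 - g i) * y := by rw [hy]; ring
        _ = 0 := by rw [hg3 i, zero_mul]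
    have hx0 : x = ∑ i : ↥(minimalPrimes S), c i * ((1 - g i) * x) := by
      calc x = (∑ i : ↥(minimalPrimes S), c i * (1 - g i)) * x := by rw [hc, one_mul]
        _ = ∑ i : ↥(minimalPrimes S), c i * ((1 - g i) * x) := by
            rw [Finset.sum_mul]; exact Finset.sum_congr rfl fun i _ => by ring
    rw [Ideal.mem_bot]
    simpa [hzero] using hx0
  -- the CRT equivalence
  let E0 := Ideal.quotientInfRingEquivPiQuotient (fun i : ↥(minimalPrimes S) => Ideal.span {g i}) hpair
  let E1 : S ≃+* ∀ i : ↥(minimalPrimes S), S ⧸ Ideal.span {g i} :=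
    ((RingEquiv.quotientBot S).symm.trans (Ideal.quotEquivOfEq hinf.symm)).trans E0
  -- each factor is a valuation ring
  have hval : ∀ i : ↥(minimalPrimes S),
      ∀ I J : Ideal (S ⧸ Ideal.span {g i}), I ≤ J ∨ J ≤ I := by
    intro i
    haveI : IsBezout (S ⧸ Ideal.span {g i}) :=
      Function.Surjective.isBezout _ Ideal.Quotient.mk_surjective
    have hproper : Ideal.span {g i} ≠ ⊤ := by
      intro htop'
      obtain ⟨M, hM, hle⟩ := Ideal.exists_le_maximal (i : Ideal S) i.2.1.1.ne_top
      have hgM : g i ∈ M := hg1 i M hM.isPrime hle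
      exact hM.ne_top (M.eq_top_of_isUnit_mem hgM (Ideal.span_singleton_eq_top.mp htop'))
    haveI : Nontrivial (S ⧸ Ideal.span {g i}) := Ideal.Quotient.nontrivial_iff.mpr hproper
    have hile : ∀ N : Ideal (S ⧸ Ideal.span {g i}), N.IsMaximal →
        ((i : Ideal S) ≤ Ideal.comap (Ideal.Quotient.mk (Ideal.span {g i})) N ∧
          (Ideal.comap (Ideal.Quotient.mk (Ideal.span {g i})) N).IsMaximal) := by
      intro N hN
      haveI := hN
      have hcM : (Ideal.comap (Ideal.Quotient.mk (Ideal.span {g i})) N).IsMaximal :=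
        Ideal.comap_isMaximal_of_surjective _ Ideal.Quotient.mk_surjective
      refine ⟨?_, hcM⟩
      have hgi : g i ∈ Ideal.comap (Ideal.Quotient.mk (Ideal.span {g i})) N := by
        show Ideal.Quotient.mk (Ideal.span {g i}) (g i) ∈ N
        rw [Ideal.Quotient.eq_zero_iff_mem.mpr (Ideal.mem_span_singleton_self _)]
        exact N.zero_mem
      obtain ⟨P0, hP0, hP0le⟩ :=
        Ideal.exists_minimalPrimes_le
          (bot_le : (⊥ : Ideal S) ≤ Ideal.comap (Ideal.Quotient.mk (Ideal.span {g i})) N)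
      by_cases hk : (⟨P0, hP0⟩ : ↥(minimalPrimes S)) = i
      · have hPi : P0 = (i : Ideal S) := Subtype.ext_iff.mp hk
        rw [← hPi]
        exact hP0le
      · exact absurd hgi (hg2 i _ hcM.isPrime ⟨P0, hP0⟩ hk hP0le)
    haveI : IsLocalRing (S ⧸ Ideal.span {g i}) := by
      apply IsLocalRing.of_unique_max_ideal
      obtain ⟨Mb, hMb⟩ := Ideal.exists_maximal (S ⧸ Ideal.span {g i})
      refine ⟨Mb, hMb, ?_⟩
      intro N hN
      apply Ideal.comap_injective_of_surjective (Ideal.Quotient.mk (Ideal.span {g i}))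
        Ideal.Quotient.mk_surjective
      exact PM (i : Ideal S) _ _ i.2.1.1 (hile N hN).2 (hile Mb hMb).2 (hile N hN).1 (hile Mb hMb).1
    exact chain_of_local_bezout _
  -- assemble
  let e : Fin (Fintype.card ↥(minimalPrimes S)) ≃ ↥(minimalPrimes S) :=
    (Fintype.equivFin ↥(minimalPrimes S)).symm
  refine ⟨Fintype.card ↥(minimalPrimes S),
    fun k => ⟨S ⧸ Ideal.span {g (e k)}, hval (e k)⟩,
    ⟨E1.trans (RingEquiv.piCongrLeft (fun i : ↥(minimalPrimes S) => S ⧸ Ideal.span {g i}) e).symm⟩⟩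

theorem quotient_everywhere_adequate_iff_product_of_valuation_rings (R : Type)
    [CommRing R] [IsDomain R] [IsBezout R]
    (hmin : ∀ x : R, x ≠ 0 → ¬IsUnit x → (Ideal.span {x}).minimalPrimes.Finite)
    (a : R) (ha : a ≠ 0) (hu : ¬IsUnit a) :
    (∀ x : R ⧸ Ideal.span {a}, IsAdequateElement x) ↔
      ∃ (n : ℕ) (V : Fin n → ValuationRingPkg),
        Nonempty ((R ⧸ Ideal.span {a}) ≃+* ∀ i, (V i).carrier) := by
  constructor
  · intro had
    haveI : IsBezout (R ⧸ Ideal.span {a}) :=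
      Function.Surjective.isBezout _ Ideal.Quotient.mk_surjective
    haveI : Nontrivial (R ⧸ Ideal.span {a}) :=
      Ideal.Quotient.nontrivial_iff.mpr (by rwa [Ne, Ideal.span_singleton_eq_top])
    apply prod_decomp _ ?_ had
    have h := hmin a ha hu
    rw [Ideal.minimalPrimes_eq_comap] at h
    exact Set.Finite.of_finite_image h
      ((Ideal.comap_injective_of_surjective _ Ideal.Quotient.mk_surjective).injOn)
  · rintro ⟨n, V, ⟨E⟩⟩ x
    have hprod : ∀ y : (∀ i, (V i).carrier), IsAdequateElement y :=
      adequate_pi fun i => adequate_of_ideal_chain (V i).idealsTotallyOrdered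
    have h := isAdequateElement_map E.symm (hprod (E x))
    rwa [RingEquiv.symm_apply_apply] at h
end

section
/- Let R be a Bezout domain in which every nonzero nonunit element has only finitely many prime ideals minimal over it and in which every nonzero prime ideal is contained in only finitely many maximal ideals. Then every nonzero nonunit element a of R is an element of almost stable range 1, i.e. the quotient ring R/aR has stable range 1. -/
/-- By the Chinese remainder theorem we may choose `t` lying in exactly those maximal ideals
that do not contain `a`; then `a + b * t` avoids every maximal ideal. -/
theorem HasStableRangeOne.of_finite_isMaximal {A : Type*} [CommRing A]
    (h : {M : Ideal A | M.IsMaximal}.Finite) : HasStableRangeOne A := by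
  classical
  have := h.to_subtype
  intro a b hab
  have hcoprime : Pairwise fun M N : {M : Ideal A | M.IsMaximal} => IsCoprime M.1 N.1 :=
    fun M N hne => @Ideal.isCoprime_of_isMaximal _ _ _ _ M.2 N.2 (Subtype.coe_ne_coe.mpr hne)
  obtain ⟨t, ht⟩ := Ideal.exists_forall_sub_mem_ideal (I := Subtype.val) hcoprime
    fun M => if a ∈ M.1 then 1 else 0
  refine ⟨t, not_not.mp fun hnu => ?_⟩
  obtain ⟨M, hM, hmem⟩ := exists_max_ideal_of_mem_nonunits hnu
  have htM := ht ⟨M, hM⟩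
  by_cases haM : a ∈ M
  · have hbM : b ∉ M := fun hbM => hM.ne_top <| by
      rw [eq_top_iff, ← hab]
      exact sup_le ((Ideal.span_singleton_le_iff_mem _).mpr haM)
        ((Ideal.span_singleton_le_iff_mem _).mpr hbM)
    have htM' : t ∉ M := fun htM' => hM.ne_top <|
      (Ideal.eq_top_iff_one _).mpr (by simpa [haM] using M.sub_mem htM' htM)
    have hbtM : b * t ∈ M := by simpa using M.sub_mem hmem haM
    exact (hM.isPrime.mem_or_mem hbtM).elim hbM htM'
  · simp only [haM, if_false, sub_zero] at htM
    exact haM (by simpa using M.sub_mem hmem (M.mul_mem_left b htM))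

theorem Ideal.finite_isMaximal_quotient {R : Type*} [CommRing R] (I : Ideal R)
    (h : {M : Ideal R | M.IsMaximal ∧ I ≤ M}.Finite) :
    {M : Ideal (R ⧸ I) | M.IsMaximal}.Finite := by
  refine Set.Finite.of_finite_image (h.subset ?_)
    (Ideal.comap_injective_of_surjective _ Ideal.Quotient.mk_surjective).injOn
  rintro _ ⟨M, hM, rfl⟩
  refine ⟨Ideal.comap_isMaximal_of_surjective _ Ideal.Quotient.mk_surjective (H := hM), ?_⟩
  simpa only [Ideal.mk_ker] using Ideal.ker_le_comap (Ideal.Quotient.mk I) (K := M)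

theorem Ideal.finite_isMaximal_le_of_minimalPrimes {R : Type*} [CommRing R] (I : Ideal R)
    (hI : I.minimalPrimes.Finite)
    (h : ∀ P ∈ I.minimalPrimes, {M : Ideal R | M.IsMaximal ∧ P ≤ M}.Finite) :
    {M : Ideal R | M.IsMaximal ∧ I ≤ M}.Finite := by
  refine (hI.biUnion h).subset ?_
  rintro M ⟨hM, hIM⟩
  have := hM.isPrime
  obtain ⟨P, hP, hPM⟩ := Ideal.exists_minimalPrimes_le hIM
  exact Set.mem_biUnion hP ⟨hM, hPM⟩

theorem almost_stable_range_one_general (R : Type*) [CommRing R]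
    (hmin : ∀ x : R, x ≠ 0 → ¬IsUnit x → (Ideal.span {x}).minimalPrimes.Finite)
    (hfin : ∀ P : Ideal R, P ≠ ⊥ → P.IsPrime →
      {M : Ideal R | M.IsMaximal ∧ P ≤ M}.Finite)
    (a : R) (ha : a ≠ 0) (hu : ¬IsUnit a) :
    HasStableRangeOne (R ⧸ Ideal.span {a}) := by
  have hne_bot : ∀ P ∈ (Ideal.span {a}).minimalPrimes, P ≠ ⊥ := fun P hP hbot =>
    ha <| (Submodule.mem_bot R).mp <| hbot ▸ hP.1.2 (Ideal.mem_span_singleton_self a)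
  refine HasStableRangeOne.of_finite_isMaximal <| Ideal.finite_isMaximal_quotient _ <|
    Ideal.finite_isMaximal_le_of_minimalPrimes _ (hmin a ha hu) fun P hPmin => ?_
  exact hfin P (hne_bot P hPmin) hPmin.1.1

theorem almost_stable_range_one (R : Type*) [CommRing R] [IsDomain R] [IsBezout R]
    (hmin : ∀ x : R, x ≠ 0 → ¬IsUnit x → (Ideal.span {x}).minimalPrimes.Finite)
    (hfin : ∀ P : Ideal R, P ≠ ⊥ → P.IsPrime →
      {M : Ideal R | M.IsMaximal ∧ P ≤ M}.Finite)
    (a : R) (ha : a ≠ 0) (hu : ¬IsUnit a) :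
    HasStableRangeOne (R ⧸ Ideal.span {a}) :=
  almost_stable_range_one_general R hmin hfin a ha hu
end

section
/- Let R be a commutative principal ideal domain and let a be a nonzero nonunit element of R. Then a is an element of almost stable range 1, i.e. R/aR has stable range 1. -/
private lemma isCoprime_of_irreducible_not_dvd {R : Type*} [CommRing R] [IsDomain R]
    [IsPrincipalIdealRing R] {p x : R} (hp : Irreducible p) (h : ¬ p ∣ x) :
    IsCoprime x p := by
  have hmax := PrincipalIdealRing.isMaximal_of_irreducible hp
  have hx : x ∉ Ideal.span ({p} : Set R) := by
    rwa [Ideal.mem_span_singleton]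
  have htop : Ideal.span ({p} : Set R) ⊔ Ideal.span ({x} : Set R) = ⊤ := by
    rcases hmax.exists_inv hx with ⟨y, i, hi, hyi⟩
    rw [eq_top_iff]
    intro r _
    have h1 : (1 : R) ∈ Ideal.span ({p} : Set R) ⊔ Ideal.span ({x} : Set R) := by
      have : (1 : R) = i + y * x := by linear_combination -hyi
      rw [this]
      exact Submodule.add_mem_sup hi (Ideal.mem_span_singleton'.mpr ⟨y, rfl⟩)
    simpa using Ideal.mul_mem_left _ r h1
  have h1 : (1 : R) ∈ Ideal.span ({p} : Set R) ⊔ Ideal.span ({x} : Set R) := by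
    rw [htop]; trivial
  rcases Submodule.mem_sup.mp h1 with ⟨m, hm, n, hn, hmn⟩
  rcases Ideal.mem_span_singleton'.mp hm with ⟨c, rfl⟩
  rcases Ideal.mem_span_singleton'.mp hn with ⟨d, rfl⟩
  exact ⟨d, c, by linear_combination hmn⟩

private lemma key_coprime {R : Type*} [CommRing R] [IsDomain R] [IsPrincipalIdealRing R]
    (a : R) : ∀ u v : R, a ≠ 0 → (∃ x y z : R, u * x + v * y + a * z = 1) →
      ∃ t : R, IsCoprime (u + v * t) a := by
  induction a using WfDvdMonoid.induction_on_irreducible with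
  | zero =>
    intro u v h0 _
    exact absurd rfl h0
  | unit w hw =>
    intro u v _ _
    obtain ⟨wu, rfl⟩ := hw
    exact ⟨0, 0, (↑wu⁻¹ : R), by simp⟩
  | mul a p ha0 hp ih =>
    intro u v _ ⟨x, y, z, h⟩
    obtain ⟨t', ht'⟩ := ih u v ha0 ⟨x, y, p * z, by linear_combination h⟩
    by_cases hdvd : p ∣ u + v * t'
    · refine ⟨t' + a, ?_⟩
      have hw' : u + v * (t' + a) = (u + v * t') + a * v := by ring
      rw [hw']
      have hca : IsCoprime ((u + v * t') + a * v) a := ht'.add_mul_left_left v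
      have hcp : IsCoprime ((u + v * t') + a * v) p := by
        apply isCoprime_of_irreducible_not_dvd hp
        intro hd
        have hpa : p ∣ a * v := (dvd_add_right hdvd).mp hd
        have hprime : Prime p := hp.prime
        rcases hprime.dvd_or_dvd hpa with hpa' | hpv
        · rcases ht' with ⟨c, d, hcd⟩
          refine hprime.not_unit (isUnit_of_dvd_one ?_)
          obtain ⟨e, he⟩ := hdvd
          obtain ⟨f, hf⟩ := hpa'
          exact ⟨c * e + d * f, by rw [← hcd, he, hf]; ring⟩
        · have hpu : p ∣ u := by
            have : u = (u + v * t') - v * t' := by ring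
            rw [this]
            exact dvd_sub hdvd (Dvd.dvd.mul_right (hpv) t')
          exact hprime.not_unit (isUnit_of_dvd_one (by
            have : p ∣ u * x + v * y + p * a * z :=
              dvd_add (dvd_add (hpu.mul_right x) (hpv.mul_right y)) ⟨a * z, by ring⟩
            rwa [h] at this))
      exact hcp.mul_right hca
    · refine ⟨t', ?_⟩
      exact (isCoprime_of_irreducible_not_dvd hp hdvd).mul_right ht'

theorem pid_element_almost_stable_range_one (R : Type*) [CommRing R] [IsDomain R]
    [IsPrincipalIdealRing R] (a : R) (ha : a ≠ 0) (hu : ¬IsUnit a) :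
    HasStableRangeOne (R ⧸ Ideal.span {a}) := by
  intro x y hxy
  obtain ⟨u, rfl⟩ := Ideal.Quotient.mk_surjective x
  obtain ⟨v, rfl⟩ := Ideal.Quotient.mk_surjective y
  -- extract a Bezout style relation in R
  have h1 : (1 : R ⧸ Ideal.span {a}) ∈
      Ideal.span {Ideal.Quotient.mk _ u} ⊔ Ideal.span {Ideal.Quotient.mk _ v} := by
    rw [← Ideal.add_eq_sup, hxy]; trivial
  rcases Submodule.mem_sup.mp h1 with ⟨m, hm, n, hn, hmn⟩
  rcases Ideal.mem_span_singleton'.mp hm with ⟨c, rfl⟩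
  rcases Ideal.mem_span_singleton'.mp hn with ⟨d, rfl⟩
  obtain ⟨c', rfl⟩ := Ideal.Quotient.mk_surjective c
  obtain ⟨d', rfl⟩ := Ideal.Quotient.mk_surjective d
  have hmem : c' * u + d' * v - 1 ∈ Ideal.span ({a} : Set R) := by
    rw [← Ideal.Quotient.eq_zero_iff_mem]
    push_cast [map_sub, map_add, map_mul, map_one]
    rw [sub_eq_zero]
    exact_mod_cast hmn
  rcases Ideal.mem_span_singleton'.mp hmem with ⟨z, hz⟩
  obtain ⟨t, c'', d'', hcd⟩ := key_coprime a u v ha ⟨c', d', -z, by linear_combination -hz⟩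
  refine ⟨Ideal.Quotient.mk _ t, IsUnit.of_mul_eq_one (Ideal.Quotient.mk _ c'') ?_⟩
  have : (Ideal.Quotient.mk (Ideal.span {a})) ((u + v * t) * c'' + a * d'') = 1 := by
    rw [show (u + v * t) * c'' + a * d'' = c'' * (u + v * t) + d'' * a by ring, hcd, map_one]
  rw [map_add, map_mul, map_mul] at this
  rw [show (Ideal.Quotient.mk (Ideal.span {a})) a = 0 from
    Ideal.Quotient.eq_zero_iff_mem.mpr (Ideal.mem_span_singleton_self a),
    zero_mul, add_zero, map_add, map_mul] at this
  linear_combination this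
end

section
/- Let R be an integral domain and let a be a nonzero nonunit element of R such that there is exactly one prime ideal of R minimal over aR. Then a is pseudo-irreducible. -/
namespace Ideal

variable {R : Type*} [CommRing R]

theorem le_of_forall_minimalPrimes_eq {I P J : Ideal R} (hP : ∀ Q ∈ I.minimalPrimes, Q = P)
    [J.IsPrime] (hIJ : I ≤ J) : P ≤ J := by
  obtain ⟨Q, hQ, hQJ⟩ := exists_minimalPrimes_le hIJ
  exact hP Q hQ ▸ hQJ

theorem isUnit_of_isCoprime_of_mem_minimalPrime {P : Ideal R} {x y : R}
    (hP : ∀ Q ∈ (span {x * y}).minimalPrimes, Q = P) (hx : x ∈ P) (hxy : IsCoprime x y) :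
    IsUnit y := by
  by_contra hy
  obtain ⟨M, hM, hyM⟩ := exists_max_ideal_of_mem_nonunits hy
  have hxyM : span {x * y} ≤ M := span_singleton_le_iff_mem M |>.mpr (M.mul_mem_left x hyM)
  exact hM.isPrime.notMem_of_isCoprime_of_mem hxy (le_of_forall_minimalPrimes_eq hP hxyM hx) hyM

theorem isUnit_or_isUnit_of_isCoprime_of_existsUnique_minimalPrime {x y : R}
    (h : ∃! P : Ideal R, P ∈ (span {x * y}).minimalPrimes) (hxy : IsCoprime x y) :
    IsUnit x ∨ IsUnit y := by
  obtain ⟨P, hPmin, hP⟩ := h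
  rcases hPmin.1.1.mem_or_mem (hPmin.1.2 (mem_span_singleton_self _)) with hx | hy
  · exact .inr (isUnit_of_isCoprime_of_mem_minimalPrime hP hx hxy)
  · rw [mul_comm] at hP
    exact .inl (isUnit_of_isCoprime_of_mem_minimalPrime hP hy hxy.symm)

end Ideal

theorem pseudoIrreducible_of_unique_minimal_prime_general {R : Type*} [CommRing R]
    (a : R) (ha : a ≠ 0) (hu : ¬IsUnit a)
    (huniq : ∃! P : Ideal R, P ∈ (Ideal.span {a}).minimalPrimes) :
    PseudoIrreducible a := by
  refine ⟨ha, hu, fun b c hbc hsum => ?_⟩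
  subst hbc
  have hcop : IsCoprime b c :=
    (Ideal.isCoprime_span_singleton_iff b c).mp (Ideal.isCoprime_iff_sup_eq.mpr hsum)
  exact Ideal.isUnit_or_isUnit_of_isCoprime_of_existsUnique_minimalPrime huniq hcop

theorem pseudoIrreducible_of_unique_minimal_prime {R : Type*} [CommRing R] [IsDomain R]
    (a : R) (ha : a ≠ 0) (hu : ¬IsUnit a)
    (huniq : ∃! P : Ideal R, P ∈ (Ideal.span {a}).minimalPrimes) :
    PseudoIrreducible a :=
  pseudoIrreducible_of_unique_minimal_prime_general a ha hu huniq
end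

section
/- Let R be an integral domain such that every nonzero nonunit element of R has only finitely many prime ideals minimal over it. Then R is a complete comaximal factorization domain: every nonzero nonunit element of R has a complete comaximal factorization. -/
/-- A complete comaximal factorization of `d` is a factorization `d = d_1 ⋯ d_n` into
pairwise comaximal nonzero nonunit pseudo-irreducible factors. -/
def HasCompleteComaximalFactorization {R : Type*} [CommRing R] (a : R) : Prop :=
  ∃ (n : ℕ) (d : Fin n → R), a = ∏ i, d i ∧ (∀ i, PseudoIrreducible (d i)) ∧
    ∀ i j, i ≠ j → Ideal.span {d i} + Ideal.span {d j} = ⊤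

/-! Induct on the number of minimal primes of `(a)`. If `a` is not pseudo-irreducible, then
`a = b * c` with `b`, `c` comaximal nonunits. A prime containing `(b) * (c)` contains exactly one
of `(b)`, `(c)`, so the minimal primes of `(a)` are the disjoint union of those of `(b)` and of
`(c)`, both nonempty; hence both counts are smaller, and complete comaximal factorizations of `b`
and `c` concatenate to one of `a`. -/

namespace Ideal

variable {R : Type*} [CommRing R] {I J : Ideal R}

theorem minimalPrimes_mul_subset : (I * J).minimalPrimes ⊆ I.minimalPrimes ∪ J.minimalPrimes := by
  intro p hp
  have hprime_mul : (fun q : Ideal R => q.IsPrime ∧ I * J ≤ q) =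
      fun q => (q.IsPrime ∧ I ≤ q) ∨ (q.IsPrime ∧ J ≤ q) := by
    funext q
    exact propext ⟨fun ⟨hq, hle⟩ => (hq.mul_le.1 hle).imp (⟨hq, ·⟩) (⟨hq, ·⟩),
      fun h => h.elim (fun ⟨hq, hI⟩ => ⟨hq, mul_le_left.trans hI⟩)
        (fun ⟨hq, hJ⟩ => ⟨hq, mul_le_right.trans hJ⟩)⟩
  have hp : Minimal (fun q : Ideal R => q.IsPrime ∧ I * J ≤ q) p := hp
  rw [hprime_mul] at hp
  exact hp.or

theorem minimalPrimes_subset_minimalPrimes_mul_of_isCoprime (h : IsCoprime I J) :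
    I.minimalPrimes ⊆ (I * J).minimalPrimes := by
  intro p (hp : Minimal (fun q : Ideal R => q.IsPrime ∧ I ≤ q) p)
  refine ⟨⟨hp.prop.1, mul_le_left.trans hp.prop.2⟩,
    fun q ⟨hq, hIJ⟩ hqp => hp.le_of_le ⟨hq, ?_⟩ hqp⟩
  refine (hq.mul_le.1 hIJ).resolve_right fun hJ => hp.prop.1.ne_top ?_
  exact top_le_iff.1 (h.sup_eq ▸ sup_le hp.prop.2 (hJ.trans hqp))

theorem minimalPrimes_mul_of_isCoprime (h : IsCoprime I J) :
    (I * J).minimalPrimes = I.minimalPrimes ∪ J.minimalPrimes :=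
  minimalPrimes_mul_subset.antisymm <| Set.union_subset
    (minimalPrimes_subset_minimalPrimes_mul_of_isCoprime h)
    (mul_comm I J ▸ minimalPrimes_subset_minimalPrimes_mul_of_isCoprime h.symm)

theorem disjoint_minimalPrimes_of_isCoprime (h : IsCoprime I J) :
    Disjoint I.minimalPrimes J.minimalPrimes :=
  Set.disjoint_left.2 fun _ hI hJ =>
    hI.isPrime.ne_top (top_le_iff.1 (h.sup_eq ▸ sup_le hI.le hJ.le))

theorem ncard_minimalPrimes_mul_of_isCoprime (h : IsCoprime I J) (hI : I.minimalPrimes.Finite)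
    (hJ : J.minimalPrimes.Finite) :
    (I * J).minimalPrimes.ncard = I.minimalPrimes.ncard + J.minimalPrimes.ncard := by
  rw [minimalPrimes_mul_of_isCoprime h,
    Set.ncard_union_eq (disjoint_minimalPrimes_of_isCoprime h) hI hJ]

theorem ncard_minimalPrimes_pos (hI : I ≠ ⊤) (hfin : I.minimalPrimes.Finite) :
    0 < I.minimalPrimes.ncard :=
  (Set.ncard_pos hfin).2 (Set.nonempty_coe_sort.1 (nonempty_minimalPrimes hI))

theorem span_singleton_add_span_singleton_eq_top_iff_s16 {x y : R} :
    span {x} + span {y} = ⊤ ↔ IsCoprime x y := by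
  rw [← isCoprime_span_singleton_iff, isCoprime_iff_add, one_eq_top]

end Ideal

open Ideal

section

variable {R : Type*} [CommRing R]

theorem pseudoIrreducible_iff {c : R} : PseudoIrreducible c ↔
    c ≠ 0 ∧ ¬IsUnit c ∧ ∀ a b : R, c = a * b → IsCoprime a b → IsUnit a ∨ IsUnit b := by
  simp only [PseudoIrreducible, span_singleton_add_span_singleton_eq_top_iff_s16]

theorem exists_isCoprime_nonunits_of_not_pseudoIrreducible {a : R} (ha : a ≠ 0)
    (hu : ¬IsUnit a) (h : ¬PseudoIrreducible a) :
    ∃ b c, a = b * c ∧ IsCoprime b c ∧ ¬IsUnit b ∧ ¬IsUnit c := by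
  simpa [pseudoIrreducible_iff, ha, hu] using h

namespace HasCompleteComaximalFactorization

theorem of_pseudoIrreducible {a : R} (h : PseudoIrreducible a) :
    HasCompleteComaximalFactorization a :=
  ⟨1, fun _ => a, by simp, fun _ => h, fun i j hij => absurd (Subsingleton.elim i j) hij⟩

theorem mul {b c : R} (hb : HasCompleteComaximalFactorization b)
    (hc : HasCompleteComaximalFactorization c) (hbc : IsCoprime b c) :
    HasCompleteComaximalFactorization (b * c) := by
  obtain ⟨m, d, rfl, hd, hdd⟩ := hb
  obtain ⟨n, e, rfl, he, hee⟩ := hc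
  have hde : ∀ i j, IsCoprime (d i) (e j) := fun i j =>
    (hbc.of_isCoprime_of_dvd_left (Finset.dvd_prod_of_mem d (Finset.mem_univ i)))
      |>.of_isCoprime_of_dvd_right (Finset.dvd_prod_of_mem e (Finset.mem_univ j))
  refine ⟨m + n, Fin.append d e, by simp [Fin.prod_univ_add], ?_, ?_⟩
  · simpa [Fin.forall_fin_add] using ⟨hd, he⟩
  · simp only [Fin.forall_fin_add, Fin.append_left, Fin.append_right, ne_eq,
      span_singleton_add_span_singleton_eq_top_iff_s16] at hdd hee ⊢
    refine ⟨fun i => ⟨fun j hij => hdd i j (by simpa using hij), fun j _ => hde i j⟩,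
      fun i => ⟨fun j _ => (hde j i).symm, fun j hij => hee i j (by simpa using hij)⟩⟩

end HasCompleteComaximalFactorization

end

theorem complete_comaximal_factorization_of_finitely_many_minimal_primes_general
    {R : Type*} [CommRing R]
    (hmin : ∀ x : R, x ≠ 0 → ¬IsUnit x → (Ideal.span {x}).minimalPrimes.Finite) :
    ∀ a : R, a ≠ 0 → ¬IsUnit a → HasCompleteComaximalFactorization a := by
  intro a
  induction hn : (span {a}).minimalPrimes.ncard using Nat.strong_induction_on generalizing a with
  | _ n ih =>
  intro ha hu
  by_cases hpi : PseudoIrreducible a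
  · exact .of_pseudoIrreducible hpi
  obtain ⟨b, c, rfl, hbc, hb, hc⟩ := exists_isCoprime_nonunits_of_not_pseudoIrreducible ha hu hpi
  have hb0 : b ≠ 0 := left_ne_zero_of_mul ha
  have hc0 : c ≠ 0 := right_ne_zero_of_mul ha
  have hsplit := ncard_minimalPrimes_mul_of_isCoprime ((isCoprime_span_singleton_iff b c).2 hbc)
    (hmin b hb0 hb) (hmin c hc0 hc)
  rw [span_singleton_mul_span_singleton, hn] at hsplit
  have hbpos := ncard_minimalPrimes_pos (mt span_singleton_eq_top.1 hb) (hmin b hb0 hb)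
  have hcpos := ncard_minimalPrimes_pos (mt span_singleton_eq_top.1 hc) (hmin c hc0 hc)
  exact (ih _ (by omega) b rfl hb0 hb).mul (ih _ (by omega) c rfl hc0 hc) hbc

theorem complete_comaximal_factorization_of_finitely_many_minimal_primes
    {R : Type*} [CommRing R] [IsDomain R]
    (hmin : ∀ x : R, x ≠ 0 → ¬IsUnit x → (Ideal.span {x}).minimalPrimes.Finite) :
    ∀ a : R, a ≠ 0 → ¬IsUnit a → HasCompleteComaximalFactorization a :=
  complete_comaximal_factorization_of_finitely_many_minimal_primes_general hmin
end
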